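/- arXiv:2206.14277 — 2 statements merged into one kernel-verified Lean document; each statement's English description precedes it below -/
import Mathlib

section
/- For every m > 3 and all i, j ∈ ℤ one has [e_j, q_i^m] = δ_{j,i−1}·q_{i−1}^{m+1} + δ_{j,i+1}·q_{i+1}^{m−1} − δ_{j,i+m−2}·q_i^{m−1} − δ_{j,i+m}·q_i^{m+1}, where δ denotes the Kronecker delta (in particular [e_j, q_i^m] = 0 for all other values of j). -/
/-- Commutator `[x, y] = x*y - y*x` in a (not necessarily unital) ring. -/
def cm {A : Type*} [NonUnitalRing A] (x y : A) : A := x * y - y * x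

/-- Right-nested iterated commutator `q_i^m = [e_i, [e_{i+1}, ⋯, [e_{i+m-2}, e_{i+m-1}]⋯]]`. -/
def qq {A : Type*} [NonUnitalRing A] (e : ℤ → A) : ℕ → ℤ → A
  | 0, _ => 0
  | 1, i => e i
  | (m + 2), i => cm (e i) (qq e (m + 1) (i + 1))

set_option maxHeartbeats 1000000

section TLlemmas
variable {A : Type*} [NonUnitalRing A]

lemma cm_jacobi (a b c : A) : cm a (cm b c) = cm (cm a b) c + cm b (cm a c) := by
  simp only [cm]; noncomm_ring
lemma cm_zero_right (a : A) : cm a 0 = 0 := by simp [cm]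
lemma cm_neg_right (a x : A) : cm a (-x) = -cm a x := by simp only [cm]; noncomm_ring
lemma cm_sub_right (a x y : A) : cm a (x - y) = cm a x - cm a y := by simp only [cm]; noncomm_ring
lemma cm_eq_zero_of_commute {a b : A} (h : Commute a b) : cm a b = 0 := sub_eq_zero_of_eq h
lemma cm_swap {a b : A} (h : Commute a b) (c : A) : cm a (cm b c) = cm b (cm a c) := by
  rw [cm_jacobi, cm_eq_zero_of_commute h]; simp [cm]
lemma commute_cm {a x y : A} (hx : Commute a x) (hy : Commute a y) : Commute a (cm x y) :=
  (hx.mul_right hy).sub_right (hy.mul_right hx)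

lemma key_alg {a b X : A} (hb2 : b*b = 0) (hbab : b*a*b = b)
    (hX : a*X = X*a) (hs : b*X*b = 0) :
    cm (cm b a) (cm b X) = cm b X := by
  have m1 : (b*a)*(b*X) = b*X := by rw [show (b*a)*(b*X) = (b*a*b)*X from by noncomm_ring, hbab]
  have m2 : (b*a)*(X*b) = (b*X)*(a*b) := by
    rw [show (b*a)*(X*b) = b*((a*X)*b) from by noncomm_ring, hX]; noncomm_ring
  have m3 : (a*b)*(b*X) = 0 := by
    rw [show (a*b)*(b*X) = a*((b*b)*X) from by noncomm_ring, hb2]; simp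
  have m4 : (a*b)*(X*b) = 0 := by
    rw [show (a*b)*(X*b) = a*(b*X*b) from by noncomm_ring, hs]; simp
  have m5 : (b*X)*(b*a) = 0 := by
    rw [show (b*X)*(b*a) = (b*X*b)*a from by noncomm_ring, hs]; simp
  have m7 : (X*b)*(b*a) = 0 := by
    rw [show (X*b)*(b*a) = X*((b*b)*a) from by noncomm_ring, hb2]; simp
  have m8 : (X*b)*(a*b) = X*b := by
    rw [show (X*b)*(a*b) = X*(b*a*b) from by noncomm_ring, hbab]
  have expand : cm (cm b a) (cm b X)
      = ((b*a)*(b*X) - (b*a)*(X*b) - (a*b)*(b*X) + (a*b)*(X*b))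
        - ((b*X)*(b*a) - (b*X)*(a*b) - (X*b)*(b*a) + (X*b)*(a*b)) := by
    simp only [cm]; noncomm_ring
  rw [expand, m1, m2, m3, m4, m5, m7, m8]
  simp only [cm]; abel

lemma key_alg2 {a b c : A} (hb2 : b*b = 0) (hbab : b*a*b = b) (hbcb : b*c*b = b)
    (hac : a*c = c*a) :
    cm b (cm a (cm b c)) = cm b c - cm a b := by
  have n1 : (b*a)*(b*c) = b*c := by rw [show (b*a)*(b*c) = (b*a*b)*c from by noncomm_ring, hbab]
  have n2 : (b*a)*(c*b) = (b*c)*(a*b) := by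
    rw [show (b*a)*(c*b) = b*((a*c)*b) from by noncomm_ring, hac]; noncomm_ring
  have n3 : (b*b)*(c*a) = 0 := by rw [hb2]; simp
  have n4 : (b*c)*(b*a) = b*a := by rw [show (b*c)*(b*a) = (b*c*b)*a from by noncomm_ring, hbcb]
  have n5 : (a*b)*(c*b) = a*b := by rw [show (a*b)*(c*b) = a*(b*c*b) from by noncomm_ring, hbcb]
  have n6 : (a*c)*(b*b) = 0 := by rw [hb2]; simp
  have n7 : (c*b)*(a*b) = c*b := by rw [show (c*b)*(a*b) = c*(b*a*b) from by noncomm_ring, hbab]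
  have expand : cm b (cm a (cm b c))
      = (b*a)*(b*c) - (b*a)*(c*b) - (b*b)*(c*a) + (b*c)*(b*a)
        - ((a*b)*(c*b) - (a*c)*(b*b) - (b*c)*(a*b) + (c*b)*(a*b)) := by
    simp only [cm]; noncomm_ring
  rw [expand, n1, n2, n3, n4, n5, n6, n7]
  simp only [cm]; abel

lemma key_alg3 {b c : A} (hc2 : c*c = 0) (hcbc : c*b*c = c) :
    cm c (cm b c) = c + c := by
  have expand : cm c (cm b c) = c*b*c + c*b*c - ((c*c)*b + b*(c*c)) := by
    simp only [cm]; noncomm_ring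
  rw [expand, hcbc, hc2]; simp

variable (e : ℤ → A)

lemma far_commute (h4 : ∀ i j : ℤ, |i - j| > 1 → e i * e j = e j * e i) :
    ∀ (m : ℕ) (i j : ℤ), (j < i - 1 ∨ i + (m:ℤ) < j) → Commute (e j) (qq e m i) := by
  intro m
  induction m using Nat.strong_induction_on with
  | _ m ih =>
    match m with
    | 0 => intro i j h; exact Commute.zero_right _
    | 1 =>
      intro i j h
      exact (h4 i j (by simp only [Nat.cast_one] at h; exact lt_abs.mpr (by omega))).symm
    | (m + 2) =>
      intro i j h
      push_cast at h
      have hc1 : Commute (e j) (e i) := (h4 i j (lt_abs.mpr (by omega))).symm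
      have hc2 : Commute (e j) (qq e (m + 1) (i + 1)) :=
        ih (m + 1) (by omega) (i + 1) j (by push_cast; omega)
      exact commute_cm hc1 hc2

lemma far_cm (h4 : ∀ i j : ℤ, |i - j| > 1 → e i * e j = e j * e i)
    (m : ℕ) (i j : ℤ) (h : j < i - 1 ∨ i + (m:ℤ) < j) : cm (e j) (qq e m i) = 0 :=
  cm_eq_zero_of_commute (far_commute e h4 m i j h)

lemma top_cm' (h4 : ∀ i j : ℤ, |i - j| > 1 → e i * e j = e j * e i) :
    ∀ (m : ℕ) (i : ℤ), cm (e (i + (m:ℤ) + 1)) (qq e (m+1) i) = -(qq e (m+2) i) := by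
  intro m
  induction m with
  | zero =>
    intro i
    show cm (e (i + 0 + 1)) (e i) = _
    rw [show i + (0:ℤ) + 1 = i + 1 by ring]
    show _ = -(cm (e i) (e (i+1)))
    simp only [cm]; noncomm_ring
  | succ m ih =>
    intro i
    show cm (e (i + ((m:ℤ)+1) + 1)) (cm (e i) (qq e (m+1) (i+1))) = _
    rw [cm_swap ((h4 i (i + ((m:ℤ)+1) + 1) (lt_abs.mpr (by omega))).symm)]
    rw [show i + ((m:ℤ)+1) + 1 = (i+1) + (m:ℤ) + 1 by ring, ih (i+1), cm_neg_right]
    rfl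

lemma top_cm (h4 : ∀ i j : ℤ, |i - j| > 1 → e i * e j = e j * e i)
    (m : ℕ) (hm : 1 ≤ m) (i : ℤ) :
    cm (e (i + (m:ℤ))) (qq e m i) = -(qq e (m+1) i) := by
  obtain ⟨k, rfl⟩ : ∃ k, m = k + 1 := ⟨m - 1, by omega⟩
  have h := top_cm' e h4 k i
  push_cast
  rw [show (i + ((k:ℤ)+1)) = i + (k:ℤ) + 1 from by ring, show k+1+1 = k+2 from rfl]
  exact h

lemma sandwich' (h2 : ∀ i : ℤ, e i * e (i + 1) * e i = e i)
    (h4 : ∀ i j : ℤ, |i - j| > 1 → e i * e j = e j * e i)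
    (k : ℕ) (i : ℤ) : e i * qq e (k+2) (i+1) * e i = 0 := by
  have hX : e i * qq e (k+1) (i+1+1) = qq e (k+1) (i+1+1) * e i :=
    far_commute e h4 (k+1) (i+1+1) i (Or.inl (by omega))
  show e i * (cm (e (i+1)) (qq e (k+1) (i+1+1))) * e i = 0
  set X := qq e (k+1) (i+1+1) with hXdef
  have t1 : e i * (e (i+1) * X - X * e (i+1)) * e i
      = (e i * e (i+1)) * (X * e i) - (e i * X) * (e (i+1) * e i) := by noncomm_ring
  have s1 : (e i * e (i+1)) * (X * e i) = (e i * e (i+1) * e i) * X := by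
    rw [← hX]; noncomm_ring
  have s2 : (e i * X) * (e (i+1) * e i) = X * (e i * e (i+1) * e i) := by
    rw [hX]; noncomm_ring
  rw [cm, t1, s1, s2, h2 i, hX, sub_self]

lemma sandwich (h2 : ∀ i : ℤ, e i * e (i + 1) * e i = e i)
    (h4 : ∀ i j : ℤ, |i - j| > 1 → e i * e j = e j * e i)
    (m : ℕ) (hm : 2 ≤ m) (i : ℤ) : e i * qq e m (i+1) * e i = 0 := by
  obtain ⟨k, rfl⟩ : ∃ k, m = k + 2 := ⟨m - 2, by omega⟩
  exact sandwich' e h2 h4 k i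

lemma self_cm (h1 : ∀ i : ℤ, e i * e i = 0)
    (h2 : ∀ i : ℤ, e i * e (i + 1) * e i = e i)
    (h4 : ∀ i j : ℤ, |i - j| > 1 → e i * e j = e j * e i)
    (m : ℕ) (hm : 3 ≤ m) (i : ℤ) : cm (e i) (qq e m i) = 0 := by
  obtain ⟨k, rfl⟩ : ∃ k, m = k + 3 := ⟨m - 3, by omega⟩
  show cm (e i) (cm (e i) (qq e (k+2) (i+1))) = 0
  set Q := qq e (k+2) (i+1) with hQ
  have expand : cm (e i) (cm (e i) Q)
      = (e i * e i) * Q + Q * (e i * e i) - (e i * Q * e i + e i * Q * e i) := by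
    simp only [cm]; noncomm_ring
  rw [expand, h1 i, hQ, sandwich' e h2 h4 k i]
  simp

lemma nextstep (h1 : ∀ i : ℤ, e i * e i = 0)
    (h2 : ∀ i : ℤ, e i * e (i + 1) * e i = e i)
    (h3 : ∀ i : ℤ, e (i + 1) * e i * e (i + 1) = e (i + 1))
    (h4 : ∀ i j : ℤ, |i - j| > 1 → e i * e j = e j * e i)
    (m : ℕ) (hm : 3 ≤ m) (i : ℤ) :
    cm (e (i+1)) (qq e (m+1) i)
      = qq e m (i+1) + cm (e i) (cm (e (i+1)) (qq e m (i+1))) := by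
  obtain ⟨k, rfl⟩ : ∃ k, m = k + 3 := ⟨m - 3, by omega⟩
  show cm (e (i+1)) (cm (e i) (qq e (k+3) (i+1))) = _
  rw [cm_jacobi]
  congr 1
  show cm (cm (e (i+1)) (e i)) (cm (e (i+1)) (qq e (k+2) (i+1+1)))
      = cm (e (i+1)) (qq e (k+2) (i+1+1))
  exact key_alg (h1 (i+1)) (h3 i)
    (far_commute e h4 (k+2) (i+1+1) i (Or.inl (by omega))).eq
    (sandwich' e h2 h4 k (i+1))

lemma mid3 (h1 : ∀ i : ℤ, e i * e i = 0)
    (h2 : ∀ i : ℤ, e i * e (i + 1) * e i = e i)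
    (h3 : ∀ i : ℤ, e (i + 1) * e i * e (i + 1) = e (i + 1))
    (h4 : ∀ i j : ℤ, |i - j| > 1 → e i * e j = e j * e i)
    (i : ℤ) : cm (e (i+1)) (qq e 3 i) = qq e 2 (i+1) - qq e 2 i := by
  show cm (e (i+1)) (cm (e i) (cm (e (i+1)) (e (i+1+1))))
      = cm (e (i+1)) (e (i+1+1)) - cm (e i) (e (i+1))
  rw [show i+1+1 = i+2 from by ring]
  have hbcb := h2 (i+1)
  rw [show i+1+1 = i+2 from by ring] at hbcb
  exact key_alg2 (h1 (i+1)) (h3 i) hbcb (h4 i (i+2) (lt_abs.mpr (by omega)))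

lemma top3 (h1 : ∀ i : ℤ, e i * e i = 0)
    (h3 : ∀ i : ℤ, e (i + 1) * e i * e (i + 1) = e (i + 1))
    (h4 : ∀ i j : ℤ, |i - j| > 1 → e i * e j = e j * e i)
    (i : ℤ) : cm (e (i+2)) (qq e 3 i) = 0 := by
  show cm (e (i+2)) (cm (e i) (cm (e (i+1)) (e (i+1+1)))) = 0
  rw [show i+1+1 = i+2 from by ring]
  rw [cm_swap ((h4 i (i+2) (lt_abs.mpr (by omega))).symm)]
  have hcbc := h3 (i+1)
  rw [show i+1+1 = i+2 from by ring] at hcbc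
  rw [key_alg3 (h1 (i+2)) hcbc]
  have hc : Commute (e i) (e (i+2)) := h4 i (i+2) (lt_abs.mpr (by omega))
  exact cm_eq_zero_of_commute (hc.add_right hc)

end TLlemmas

theorem stmt_4 {A : Type*} [NonUnitalRing A] (e : ℤ → A)
    (h1 : ∀ i : ℤ, e i * e i = 0)
    (h2 : ∀ i : ℤ, e i * e (i + 1) * e i = e i)
    (h3 : ∀ i : ℤ, e (i + 1) * e i * e (i + 1) = e (i + 1))
    (h4 : ∀ i j : ℤ, |i - j| > 1 → e i * e j = e j * e i) :
    ∀ (m : ℕ), 3 < m → ∀ i j : ℤ,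
      cm (e j) (qq e m i) =
        (if j = i - 1 then qq e (m + 1) (i - 1) else 0)
          + (if j = i + 1 then qq e (m - 1) (i + 1) else 0)
          - (if j = i + (m : ℤ) - 2 then qq e (m - 1) i else 0)
          - (if j = i + (m : ℤ) then qq e (m + 1) i else 0) := by
  intro m hm i j
  obtain ⟨k, rfl⟩ : ∃ k, m = k + 4 := ⟨m - 4, by omega⟩
  clear hm
  induction k generalizing i j with
  | zero =>
    simp only [Nat.zero_add]
    rcases eq_or_ne j (i-1) with rfl | hj1
    · rw [if_pos rfl, if_neg (by omega), if_neg (by omega), if_neg (by omega)]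
      rw [show qq e (4+1) (i-1) = cm (e (i-1)) (qq e 4 (i-1+1)) from rfl,
        show i-1+1 = i from by ring]
      abel
    rcases eq_or_ne j i with rfl | hj2
    · rw [self_cm e h1 h2 h4 4 (by omega) j,
        if_neg hj1, if_neg (by omega), if_neg (by omega), if_neg (by omega)]
      simp
    rcases eq_or_ne j (i+1) with rfl | hj3
    · have hn := nextstep e h1 h2 h3 h4 3 (by omega) i
      rw [show 3+1 = 4 from rfl] at hn
      rw [self_cm e h1 h2 h4 3 (by omega) (i+1), cm_zero_right, add_zero] at hn
      rw [hn, if_neg hj1, if_pos rfl, if_neg (by omega), if_neg (by omega)]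
      rw [show (4:ℕ)-1 = 3 from rfl]
      abel
    rcases eq_or_ne j (i+2) with rfl | hj4
    · have hsw : cm (e (i+2)) (qq e 4 i) = cm (e i) (cm (e (i+2)) (qq e 3 (i+1))) := by
        show cm (e (i+2)) (cm (e i) (qq e 3 (i+1))) = _
        exact cm_swap ((h4 i (i+2) (lt_abs.mpr (by omega))).symm) _
      have hm3 := mid3 e h1 h2 h3 h4 (i+1)
      rw [show i+1+1 = i+2 from by ring] at hm3
      rw [hsw, hm3, cm_sub_right,
        far_cm e h4 2 (i+2) i (Or.inl (by omega)),
        show cm (e i) (qq e 2 (i+1)) = qq e 3 i from rfl,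
        if_neg hj1, if_neg hj3, if_pos (by push_cast; ring), if_neg (by omega),
        show (4:ℕ)-1 = 3 from rfl]
      abel
    rcases eq_or_ne j (i+3) with rfl | hj5
    · have hsw : cm (e (i+3)) (qq e 4 i) = cm (e i) (cm (e (i+3)) (qq e 3 (i+1))) := by
        show cm (e (i+3)) (cm (e i) (qq e 3 (i+1))) = _
        exact cm_swap ((h4 i (i+3) (lt_abs.mpr (by omega))).symm) _
      have ht3 := top3 e h1 h3 h4 (i+1)
      rw [show i+1+2 = i+3 from by ring] at ht3
      rw [hsw, ht3, cm_zero_right,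
        if_neg hj1, if_neg hj3, if_neg (by omega), if_neg (by omega)]
      simp
    rcases eq_or_ne j (i+4) with rfl | hj6
    · have ht := top_cm e h4 4 (by omega) i
      rw [show ((4:ℕ):ℤ) = 4 from by norm_num, show (4:ℕ)+1 = 5 from rfl] at ht
      rw [ht, if_neg hj1, if_neg hj3, if_neg (by omega), if_pos (by push_cast; ring),
        show (4:ℕ)+1 = 5 from rfl]
      abel
    · rw [far_cm e h4 4 i j (by push_cast; omega),
        if_neg hj1, if_neg hj3, if_neg (by push_cast; omega), if_neg (by push_cast; omega)]
      simp
  | succ k ih =>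
    simp only [show k+1+4 = k+5 from rfl, show k+5+1 = k+6 from rfl,
      show k+5-1 = k+4 from rfl]
    simp only [show k+4+1 = k+5 from rfl, show k+4-1 = k+3 from rfl] at ih
    rcases eq_or_ne j (i-1) with rfl | hj1
    · rw [if_pos rfl, if_neg (by omega), if_neg (by omega), if_neg (by omega)]
      rw [show qq e (k+6) (i-1) = cm (e (i-1)) (qq e (k+5) (i-1+1)) from rfl,
        show i-1+1 = i from by ring]
      abel
    rcases eq_or_ne j i with rfl | hj2
    · rw [self_cm e h1 h2 h4 (k+5) (by omega) j,
        if_neg hj1, if_neg (by omega), if_neg (by omega), if_neg (by omega)]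
      simp
    rcases eq_or_ne j (i+1) with rfl | hj3
    · have hn := nextstep e h1 h2 h3 h4 (k+4) (by omega) i
      rw [show k+4+1 = k+5 from rfl] at hn
      have hz : cm (e (i+1)) (qq e (k+4) (i+1)) = 0 := by
        rw [ih (i+1) (i+1), if_neg (by omega), if_neg (by omega), if_neg (by omega),
          if_neg (by omega)]
        simp
      rw [hz, cm_zero_right, add_zero] at hn
      rw [hn, if_neg hj1, if_pos rfl, if_neg (by omega), if_neg (by omega)]
      abel
    -- now j ∉ {i-1, i, i+1} : e j commutes with e i
    have hcm : Commute (e j) (e i) := (h4 i j (lt_abs.mpr (by omega))).symm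
    have hsw : cm (e j) (qq e (k+5) i) = cm (e i) (cm (e j) (qq e (k+4) (i+1))) := by
      show cm (e j) (cm (e i) (qq e (k+4) (i+1))) = _
      exact cm_swap hcm _
    rw [hsw, ih (i+1) j]
    rcases eq_or_ne j (i+1+1) with rfl | hj4
    · rw [if_neg (by omega), if_pos rfl, if_neg (by omega), if_neg (by omega)]
      rw [show (0:A) + qq e (k+3) (i+1+1) - 0 - 0 = qq e (k+3) (i+1+1) from by abel]
      rw [far_cm e h4 (k+3) (i+1+1) i (Or.inl (by omega)),
        if_neg (by omega), if_neg (by omega), if_neg (by omega), if_neg (by omega)]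
      simp
    rcases eq_or_ne j (i+1+(↑(k+4):ℤ)-2) with rfl | hj5
    · rw [if_neg (by omega), if_neg (by omega), if_pos rfl, if_neg (by omega)]
      rw [show (0:A) + 0 - qq e (k+3) (i+1) - 0 = -(qq e (k+3) (i+1)) from by abel]
      rw [cm_neg_right, show cm (e i) (qq e (k+3) (i+1)) = qq e (k+4) i from rfl,
        if_neg (by omega), if_neg (by omega), if_pos (by push_cast; ring), if_neg (by omega)]
      abel
    rcases eq_or_ne j (i+1+(↑(k+4):ℤ)) with rfl | hj6
    · rw [if_neg (by omega), if_neg (by omega), if_neg (by omega), if_pos rfl]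
      rw [show (0:A) + 0 - 0 - qq e (k+5) (i+1) = -(qq e (k+5) (i+1)) from by abel]
      rw [cm_neg_right, show cm (e i) (qq e (k+5) (i+1)) = qq e (k+6) i from rfl,
        if_neg (by omega), if_neg (by omega), if_neg (by omega), if_pos (by push_cast; ring)]
      abel
    · rw [if_neg (by omega), if_neg (by omega), if_neg hj5, if_neg hj6]
      rw [show (0:A) + 0 - 0 - 0 = 0 from by abel, cm_zero_right,
        if_neg hj1, if_neg hj3, if_neg (by push_cast at hj5 ⊢; omega),
        if_neg (by push_cast at hj6 ⊢; omega)]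
      simp
end

section
/- In the symplectic fermion representation the nested Temperley–Lieb commutators take the closed form: q_i^1 = b_i^×·b_i; for every s ≥ 1, q_i^{2s+1} = (−1)^s·(b_{i+2s}^×·b_i + b_i^×·b_{i+2s}); and for every s ≥ 0, q_i^{2s+2} = (−1)^{s+i}·(b_{i+2s+1}^×·b_i − b_i^×·b_{i+2s+1}), for all i ∈ ℤ. -/
lemma cm_add' {A : Type*} [Ring A] (x y z : A) : cm x (y+z) = cm x y + cm x z := by
  unfold cm; noncomm_ring

lemma cm_sub' {A : Type*} [Ring A] (x y z : A) : cm x (y-z) = cm x y - cm x z := by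
  unfold cm; noncomm_ring

lemma cm_smul' {A : Type*} [Ring A] (x y : A) (z : ℤ) : cm x (z • y) = z • cm x y := by
  unfold cm; rw [mul_smul_comm, smul_mul_assoc, smul_sub]

def eps (a c : ℤ) : ℤ :=
  if c = a - 1 then (Int.negOnePow a : ℤ) else if c = a + 1 then -(Int.negOnePow a : ℤ) else 0

lemma eps1 (j : ℤ) : eps j (j+1) = -(Int.negOnePow j : ℤ) := by
  simp only [eps, if_neg (by omega : ¬ (j+1 = j-1)), if_pos rfl, if_true]

lemma eps2 (j : ℤ) : eps (j+1) j = -(Int.negOnePow j : ℤ) := by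
  simp only [eps, if_pos (by omega : j = (j+1)-1), Int.negOnePow_succ, Units.val_neg]

lemma eps0 (j k : ℤ) (h1 : k ≠ j - 1) (h2 : k ≠ j + 1) : eps j k = 0 := by
  simp [eps, h1, h2]

lemma hz2 (i : ℤ) : (Int.negOnePow (i+1) : ℤ) * (Int.negOnePow i : ℤ) = -1 := by
  rw [Int.negOnePow_succ, Units.val_neg, neg_mul, ← Units.val_mul, Int.units_mul_self]
  rfl

theorem stmt_19 {A : Type*} [Ring A] (f fX : ℤ → A)
    (hff : ∀ i j : ℤ, f i * f j + f j * f i = 0)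
    (hXX : ∀ i j : ℤ, fX i * fX j + fX j * fX i = 0)
    (hfX : ∀ i j : ℤ,
      f i * fX j + fX j * f i = (Int.negOnePow i : ℤ) • (if i = j then (1 : A) else 0))
    (b bX : ℤ → A)
    (hb : ∀ j : ℤ, b j = f j + f (j + 1))
    (hbX : ∀ j : ℤ, bX j = fX j + fX (j + 1))
    (e : ℤ → A)
    (he : ∀ i : ℤ, e i = bX i * b i) :
    ∀ i : ℤ,
      qq e 1 i = bX i * b i ∧
      (∀ s : ℕ, 1 ≤ s →
        qq e (2 * s + 1) i =
          ((-1 : ℤ) ^ s) • (bX (i + 2 * s) * b i + bX i * b (i + 2 * s))) ∧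
      (∀ s : ℕ,
        qq e (2 * s + 2) i =
          ((-1 : ℤ) ^ s * (Int.negOnePow i : ℤ)) •
            (bX (i + 2 * s + 1) * b i - bX i * b (i + 2 * s + 1))) := by
  have hff' : ∀ a c, f a * f c = -(f c * f a) := fun a c => eq_neg_of_add_eq_zero_left (hff a c)
  have hXX' : ∀ a c, fX a * fX c = -(fX c * fX a) := fun a c => eq_neg_of_add_eq_zero_left (hXX a c)
  have hfX' : ∀ a c, f a * fX c =
      (Int.negOnePow a : ℤ) • (if a = c then (1:A) else 0) - fX c * f a :=
    fun a c => eq_sub_of_add_eq (hfX a c)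
  have hbb2 : ∀ a c, b a * b c = -(b c * b a) := by
    intro a c
    rw [hb, hb]
    rw [show (f a + f (a+1)) * (f c + f (c+1)) =
        f a * f c + (f a * f (c+1) + (f (a+1) * f c + f (a+1) * f (c+1))) from by noncomm_ring]
    rw [hff' a c, hff' a (c+1), hff' (a+1) c, hff' (a+1) (c+1)]
    noncomm_ring
  have hXX2 : ∀ a c, bX a * bX c = -(bX c * bX a) := by
    intro a c
    rw [hbX, hbX]
    rw [show (fX a + fX (a+1)) * (fX c + fX (c+1)) =
        fX a * fX c + (fX a * fX (c+1) + (fX (a+1) * fX c + fX (a+1) * fX (c+1))) from by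
      noncomm_ring]
    rw [hXX' a c, hXX' a (c+1), hXX' (a+1) c, hXX' (a+1) (c+1)]
    noncomm_ring
  have hεsmul : ∀ a c : ℤ,
      (Int.negOnePow a : ℤ) • (if a = c then (1:A) else 0) +
        ((Int.negOnePow a : ℤ) • (if a = c+1 then (1:A) else 0) +
          ((Int.negOnePow (a+1) : ℤ) • (if a+1 = c then (1:A) else 0) +
            (Int.negOnePow (a+1) : ℤ) • (if a+1 = c+1 then (1:A) else 0))) = eps a c • 1 := by
    intro a c
    simp only [eps]
    split_ifs <;> first
      | (exfalso; omega)
      | (simp only [Int.negOnePow_succ, Units.val_neg, smul_zero]; module)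
  have hbX2 : ∀ a c, b a * bX c = eps a c • (1:A) - bX c * b a := by
    intro a c
    rw [hb, hbX]
    rw [show (f a + f (a+1)) * (fX c + fX (c+1)) =
        f a * fX c + (f a * fX (c+1) + (f (a+1) * fX c + f (a+1) * fX (c+1))) from by
      noncomm_ring]
    rw [hfX' a c, hfX' a (c+1), hfX' (a+1) c, hfX' (a+1) (c+1), ← hεsmul a c]
    rw [show (fX c + fX (c+1)) * (f a + f (a+1)) =
        fX c * f a + (fX c * f (a+1) + (fX (c+1) * f a + fX (c+1) * f (a+1))) from by
      noncomm_ring]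
    abel
  have R1 : ∀ a c (x : A), b a * (bX c * x) = eps a c • x - bX c * (b a * x) := by
    intro a c x
    rw [← mul_assoc, hbX2, sub_mul, smul_mul_assoc, one_mul, mul_assoc]
  have R3 : ∀ a c (x : A), bX a * (bX c * x) = -(bX c * (bX a * x)) := by
    intro a c x
    rw [← mul_assoc, hXX2, neg_mul, mul_assoc]
  have key : ∀ i a c : ℤ, cm (e i) (bX a * b c) =
      eps i a • (bX i * b c) - eps c i • (bX a * b i) := by
    intro i a c
    simp only [cm, he]
    calc bX i * b i * (bX a * b c) - bX a * b c * (bX i * b i)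
        = bX i * (b i * (bX a * b c)) - bX a * (b c * (bX i * b i)) := by
          rw [mul_assoc, mul_assoc]
      _ = bX i * (eps i a • b c - bX a * (b i * b c)) -
            bX a * (eps c i • b i - bX i * (b c * b i)) := by
          rw [R1 i a (b c), R1 c i (b i)]
      _ = eps i a • (bX i * b c) - bX i * (bX a * (b i * b c)) -
            (eps c i • (bX a * b i) - bX a * (bX i * (b c * b i))) := by
          rw [mul_sub, mul_sub, mul_smul_comm, mul_smul_comm]
      _ = eps i a • (bX i * b c) + bX a * (bX i * (b i * b c)) -
            (eps c i • (bX a * b i) - bX a * (bX i * (b c * b i))) := by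
          rw [R3 i a (b i * b c), sub_neg_eq_add]
      _ = eps i a • (bX i * b c) - eps c i • (bX a * b i) := by
          rw [hbb2 i c, mul_neg, mul_neg]; abel
  -- specialized commutators
  have keyA : ∀ (j k : ℤ), 2 ≤ k →
      cm (e j) (bX (j+k) * b (j+1)) = (Int.negOnePow j : ℤ) • (bX (j+k) * b j) := by
    intro j k hk
    rw [key, eps0 j (j+k) (by omega) (by omega), eps2 j, zero_smul, neg_smul, zero_sub, neg_neg]
  have keyB : ∀ (j k : ℤ), 2 ≤ k →
      cm (e j) (bX (j+1) * b (j+k)) = -((Int.negOnePow j : ℤ) • (bX j * b (j+k))) := by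
    intro j k hk
    rw [key, eps1 j, eps0 (j+k) j (by omega) (by omega), zero_smul, sub_zero, neg_smul]
  -- the main induction
  have hq : ∀ (m : ℕ) (j : ℤ), qq e (m+2) j = cm (e j) (qq e (m+1) (j+1)) := fun m j => rfl
  have aux : ∀ (s : ℕ) (i : ℤ),
      qq e (2*s+2) i = ((-1:ℤ)^s * (Int.negOnePow i : ℤ)) •
          (bX (i + (2*(s:ℤ)+1)) * b i - bX i * b (i + (2*(s:ℤ)+1))) ∧
      qq e (2*s+3) i = ((-1:ℤ)^(s+1)) •
          (bX (i + (2*(s:ℤ)+2)) * b i + bX i * b (i + (2*(s:ℤ)+2))) := by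
    intro s
    induction s with
    | zero =>
      have heven : ∀ j : ℤ, qq e 2 j = ((Int.negOnePow j : ℤ)) •
          (bX (j+1) * b j - bX j * b (j+1)) := by
        intro j
        rw [show (2:ℕ) = 0 + 2 from rfl, hq 0 j]
        show cm (e j) (e (j+1)) = _
        rw [he (j+1), key, eps1 j, eps2 j]
        module
      intro i
      constructor
      · rw [show 2*0+2 = 2 from rfl, heven i]
        norm_num
      · rw [show 2*0+3 = 1+2 from rfl, hq 1 i]
        rw [show (1+1 : ℕ) = 2 from rfl, heven (i+1)]
        rw [show (i+1)+1 = i + 2 from by ring]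
        rw [cm_smul', cm_sub', keyA i 2 (by omega), keyB i 2 (by omega),
          sub_neg_eq_add, smul_add, smul_smul, smul_smul,
          show (Int.negOnePow (i+1) : ℤ) * (Int.negOnePow i : ℤ) = (-1:ℤ)^(0+1) from by
            rw [hz2]; ring]
        push_cast
        rw [smul_add]
    | succ s IH =>
      have hP : ∀ j : ℤ, qq e (2*(s+1)+2) j = ((-1:ℤ)^(s+1) * (Int.negOnePow j : ℤ)) •
          (bX (j + (2*(s:ℤ)+3)) * b j - bX j * b (j + (2*(s:ℤ)+3))) := by
        intro j
        rw [show 2*(s+1)+2 = (2*s+2)+2 from by ring, hq (2*s+2) j,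
          show (2*s+2)+1 = 2*s+3 from by ring, (IH (j+1)).2]
        rw [show (j+1) + (2*(s:ℤ)+2) = j + (2*(s:ℤ)+3) from by ring]
        rw [cm_smul', cm_add', keyA j (2*(s:ℤ)+3) (by omega), keyB j (2*(s:ℤ)+3) (by omega)]
        module
      intro i
      constructor
      · rw [hP i]
        push_cast
        rw [show i + (2*((s:ℤ)+1)+1) = i + (2*(s:ℤ)+3) from by ring]
      · rw [show 2*(s+1)+3 = (2*(s+1)+1)+2 from by ring, hq (2*(s+1)+1) i,
          show (2*(s+1)+1)+1 = 2*(s+1)+2 from by ring, hP (i+1)]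
        rw [show (i+1) + (2*(s:ℤ)+3) = i + (2*(s:ℤ)+4) from by ring]
        rw [cm_smul', cm_sub', keyA i (2*(s:ℤ)+4) (by omega), keyB i (2*(s:ℤ)+4) (by omega)]
        rw [sub_neg_eq_add, smul_add, smul_smul, smul_smul,
          show ((-1:ℤ)^(s+1) * (Int.negOnePow (i+1) : ℤ)) * (Int.negOnePow i : ℤ)
            = (-1:ℤ)^(s+1+1) from by rw [mul_assoc, hz2 i]; ring]
        push_cast
        rw [show i + (2*((s:ℤ)+1)+2) = i + (2*(s:ℤ)+4) from by ring, smul_add]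
  intro i
  refine ⟨he i, ?_, ?_⟩
  · intro s hs
    obtain ⟨t, rfl⟩ : ∃ t, s = t + 1 := ⟨s - 1, by omega⟩
    rw [show 2*(t+1)+1 = 2*t+3 from by ring, (aux t i).2]
    push_cast
    rw [show (i + 2*((t:ℤ)+1)) = i + (2*(t:ℤ)+2) from by ring]
  · intro s
    rw [(aux s i).1]
    rw [show (i + 2*(s:ℤ) + 1) = i + (2*(s:ℤ)+1) from by ring]
end
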